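/- Let X be an infinite set with the bounded coarse structure E (all supersets of the diagonal), and let A(X) be the free abelian group of exponent p on X, which is the free coarse group over (X,E) in the variety A_p. Then A(X) with its free coarse structure is unbounded, even though (X,E) is coarsely equivalent to a one-point space whose free coarse group is a bounded cyclic group of order p. Hence coarsely equivalent coarse spaces can have non-coarsely-equivalent free coarse groups. -/

import Mathlib

/-- A coarse structure on `X`. -/
def IsCoarseStructure {X : Type*} (E : Set (Set (X × X))) : Prop :=
  (∀ ε ∈ E, ∀ x : X, (x, x) ∈ ε) ∧
  (∀ ε ∈ E, ∀ δ ∈ E, {p : X × X | ∃ z : X, (p.1, z) ∈ ε ∧ (z, p.2) ∈ δ} ∈ E) ∧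
  (∀ ε ∈ E, {p : X × X | (p.2, p.1) ∈ ε} ∈ E) ∧
  (∀ ε ∈ E, ∀ ε' ⊆ ε, (∀ x : X, (x, x) ∈ ε') → ε' ∈ E)

/-- Connectedness: any two points are related by some entourage. -/
def IsConnectedCoarse {X : Type*} (E : Set (Set (X × X))) : Prop :=
  ∀ x y : X, ∃ ε ∈ E, (x, y) ∈ ε

/-- The `n`-fold sumset of `S` in an additive commutative group. -/
def nSumset {A : Type*} [AddCommGroup A] (S : Set A) (n : ℕ) : Set A :=
  {a | ∃ f : Fin n → A, (∀ i, f i ∈ S) ∧ a = ∑ i, f i}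

/-- The set `Y_ε = {x − y : (x, y) ∈ ε}` of differences of generators of the free
abelian group `A(X) = ⊕_{x ∈ X} ℤ/p` of exponent `p` on `X`. -/
def Yset {X : Type*} (p : ℕ) (ε : Set (X × X)) : Set (X →₀ ZMod p) :=
  {a | ∃ q ∈ ε, a = Finsupp.single q.1 (1 : ZMod p) - Finsupp.single q.2 (1 : ZMod p)}

/-- The coefficient-sum homomorphism `A(X) → ℤ/p`. -/
noncomputable def coeffSum (X : Type*) (p : ℕ) : (X →₀ ZMod p) →+ ZMod p :=
  Finsupp.liftAddHom fun _ : X => AddMonoidHom.id (ZMod p)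

/-- A coarse (bornologous) mapping. -/
def IsCoarseMap {X Y : Type*} (EX : Set (Set (X × X))) (EY : Set (Set (Y × Y)))
    (f : X → Y) : Prop :=
  ∀ ε ∈ EX, ∃ δ ∈ EY, ∀ q ∈ ε, (f q.1, f q.2) ∈ δ

/-- Coarse equivalence of coarse spaces: coarse maps in both directions whose
composites are uniformly close to the identities. -/
def CoarselyEquiv {X Y : Type*} (EX : Set (Set (X × X))) (EY : Set (Set (Y × Y))) :
    Prop :=
  ∃ (f : X → Y) (g : Y → X), IsCoarseMap EX EY f ∧ IsCoarseMap EY EX g ∧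
    (∃ ε ∈ EX, ∀ x : X, (x, g (f x)) ∈ ε) ∧ (∃ δ ∈ EY, ∀ y : Y, (y, f (g y)) ∈ δ)

/-- The bounded coarse structure on `X`: all supersets of the diagonal. -/
def boundedCS (X : Type*) : Set (Set (X × X)) := {ε | ∀ x : X, (x, x) ∈ ε}

/-- A group ideal on an additive group. -/
def IsAddGroupIdeal {A : Type*} [AddGroup A] (I : Set (Set A)) : Prop :=
  (∀ B ∈ I, ∀ C ⊆ B, C ∈ I) ∧
  (∀ B ∈ I, ∀ C ∈ I, B ∪ C ∈ I) ∧
  (∀ B : Set A, B.Finite → B ∈ I) ∧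
  (∀ B ∈ I, ∀ C ∈ I, {a : A | ∃ b ∈ B, ∃ c ∈ C, a = b - c} ∈ I)

/-- The coarse structure `E_I` on an additive group determined by a group ideal. -/
def addIdealCoarse {A : Type*} [AddGroup A] (I : Set (Set A)) : Set (Set (A × A)) :=
  {ε | (∀ a : A, (a, a) ∈ ε) ∧ ∃ B ∈ I, (0 : A) ∈ B ∧
    ε ⊆ {q : A × A | ∃ b ∈ B, q.2 = b + q.1}}

/-- The ideal of the free coarse structure on `A(X)` over the bounded coarse space
`(X, E)`, with base `Y_{n,ε} + {0, z, …, (p−1)z}`. -/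
def freeIdeal {X : Type*} (p : ℕ) (z : X) : Set (Set (X →₀ ZMod p)) :=
  {A | ∃ n : ℕ, ∃ ε ∈ boundedCS X, (∀ q : X × X, q ∈ ε ↔ (q.2, q.1) ∈ ε) ∧
    A ⊆ {a | ∃ b ∈ nSumset (Yset p ε) n, ∃ i : ZMod p,
      a = b + i • Finsupp.single z (1 : ZMod p)}}


/-!
Every element of the base `Y_{n,ε} + {0, z, …, (p−1)z}` of the free ideal is a sum of `n`
differences `x − y` plus a multiple of `z`, so its support has at most `2n + 1` points; an
infinite `X` carries elements of `A(X)` with arbitrarily large support, so `A(X)` itself is not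
in the ideal. The ideal is a group ideal, and for a group ideal `I` a coarse equivalence with a
bounded space writes every `a` as `b₁ + c − b₀` with `b₀, b₁` in members of `I`, which forces
the whole group into `I`. On the finite group `ℤ/p`, on the other hand, every group ideal
contains the whole group.
-/

open Finset

theorem Finsupp.exists_card_support_eq {X M : Type*} [Infinite X] [Zero M] [Nontrivial M]
    (k : ℕ) : ∃ a : X →₀ M, #a.support = k := by
  classical
  obtain ⟨s, rfl⟩ := Infinite.exists_subset_card_eq X k
  obtain ⟨m, hm⟩ := exists_ne (0 : M)
  refine ⟨Finsupp.onFinset s (fun x => if x ∈ s then m else 0) fun x hx => ?_, ?_⟩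
  · by_contra h; simp [h] at hx
  · rw [Finsupp.support_onFinset, filter_true_of_mem fun x hx => by simp [hx, hm]]

theorem IsAddGroupIdeal.univ_mem {A : Type*} [AddGroup A] [Finite A] {I : Set (Set A)}
    (hI : IsAddGroupIdeal I) : Set.univ ∈ I :=
  hI.2.2.1 _ Set.finite_univ

theorem IsAddGroupIdeal.univ_mem_of_coarselyEquiv {A Y : Type*} [AddCommGroup A]
    {I : Set (Set A)} (hI : IsAddGroupIdeal I)
    (h : CoarselyEquiv (addIdealCoarse I) (boundedCS Y)) : Set.univ ∈ I := by
  obtain ⟨hsub, -, hfin, hdiff⟩ := hI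
  obtain ⟨f, g, -, hg, ⟨ε, ⟨-, B₀, hB₀, -, hε⟩, hgf⟩, -⟩ := h
  obtain ⟨δ, ⟨-, B₁, hB₁, -, hδ⟩, hgδ⟩ := hg Set.univ fun _ => trivial
  -- `a = b₁ - (b₀ - g (f 0))`: closeness gives `g (f a) = b₀ + a`, coarseness of `g` on the
  -- entourage `univ` gives `g (f a) = b₁ + g (f 0)`.
  refine hsub _ (hdiff B₁ hB₁ _ (hdiff B₀ hB₀ _ (hfin _ (Set.finite_singleton (g (f 0))))))
    _ fun a _ => ?_
  obtain ⟨b₀, hb₀, h₀⟩ := hε (hgf a)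
  obtain ⟨b₁, hb₁, h₁⟩ := hδ (hgδ (f 0, f a) trivial)
  refine ⟨b₁, hb₁, b₀ - g (f 0), ⟨b₀, hb₀, _, rfl, rfl⟩, ?_⟩
  have : b₀ + a = b₁ + g (f 0) := h₀.symm.trans h₁
  rw [eq_sub_of_add_eq' this]
  abel

theorem coarselyEquiv_boundedCS {X Y : Type*} (x : X) (y : Y) :
    CoarselyEquiv (boundedCS X) (boundedCS Y) :=
  ⟨fun _ => y, fun _ => x, fun _ _ => ⟨Set.univ, fun _ => trivial, fun _ _ => trivial⟩,
    fun _ _ => ⟨Set.univ, fun _ => trivial, fun _ _ => trivial⟩,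
    ⟨Set.univ, fun _ => trivial, fun _ => trivial⟩, ⟨Set.univ, fun _ => trivial, fun _ => trivial⟩⟩

section nSumset

variable {A : Type*} [AddCommGroup A] {S : Set A} {n m : ℕ} {a b : A}

theorem nsmul_mem_nSumset (ha : a ∈ S) (n : ℕ) : n • a ∈ nSumset S n :=
  ⟨fun _ => a, fun _ => ha, by simp⟩

theorem add_mem_nSumset (ha : a ∈ nSumset S n) (hb : b ∈ nSumset S m) :
    a + b ∈ nSumset S (n + m) := by
  obtain ⟨f, hf, rfl⟩ := ha
  obtain ⟨g, hg, rfl⟩ := hb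
  refine ⟨Fin.append f g, Fin.addCases (by simpa using hf) (by simpa using hg), ?_⟩
  simp [Fin.sum_univ_add]

theorem neg_mem_nSumset (hS : ∀ b ∈ S, -b ∈ S) (ha : a ∈ nSumset S n) : -a ∈ nSumset S n := by
  obtain ⟨f, hf, rfl⟩ := ha
  exact ⟨fun i => -f i, fun i => hS _ (hf i), by simp⟩

theorem nSumset_mono {T : Set A} (h : S ⊆ T) : nSumset S n ⊆ nSumset T n := by
  rintro a ⟨f, hf, rfl⟩
  exact ⟨f, fun i => h (hf i), rfl⟩

theorem card_support_le_of_mem_nSumset {X M : Type*} [AddCommGroup M] {S : Set (X →₀ M)}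
    {k : ℕ} (hS : ∀ a ∈ S, #a.support ≤ k) {a : X →₀ M} (ha : a ∈ nSumset S n) :
    #a.support ≤ n * k := by
  classical
  obtain ⟨f, hf, rfl⟩ := ha
  calc #(∑ i, f i).support ≤ #(univ.biUnion fun i => (f i).support) :=
        card_le_card Finsupp.support_finsetSum
    _ ≤ ∑ i, #(f i).support := card_biUnion_le
    _ ≤ ∑ _i : Fin n, k := sum_le_sum fun i _ => hS _ (hf i)
    _ = n * k := by simp

end nSumset

section FreeIdeal

variable {X : Type*} {p : ℕ} {ε ε' : Set (X × X)}

theorem Yset_mono (h : ε ⊆ ε') : Yset p ε ⊆ Yset p ε' := by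
  rintro a ⟨q, hq, rfl⟩
  exact ⟨q, h hq, rfl⟩

theorem neg_mem_Yset (hsym : ∀ q : X × X, q ∈ ε ↔ (q.2, q.1) ∈ ε) {a : X →₀ ZMod p}
    (ha : a ∈ Yset p ε) : -a ∈ Yset p ε := by
  obtain ⟨⟨x, y⟩, hq, rfl⟩ := ha
  exact ⟨(y, x), (hsym _).1 hq, by rw [neg_sub]⟩

theorem card_support_le_of_mem_Yset {a : X →₀ ZMod p} (ha : a ∈ Yset p ε) :
    #a.support ≤ 2 := by
  classical
  obtain ⟨⟨x, y⟩, -, rfl⟩ := ha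
  calc #(Finsupp.single x (1 : ZMod p) - Finsupp.single y 1).support
      ≤ #({x} ∪ {y}) :=
        card_le_card (Finsupp.support_sub.trans
          (union_subset_union Finsupp.support_single_subset Finsupp.support_single_subset))
    _ ≤ 2 := card_union_le _ _

def freeBase (p : ℕ) (z : X) (n : ℕ) (ε : Set (X × X)) : Set (X →₀ ZMod p) :=
  {a | ∃ b ∈ nSumset (Yset p ε) n, ∃ i : ZMod p, a = b + i • Finsupp.single z (1 : ZMod p)}

variable {z : X} {n m : ℕ} {a b : X →₀ ZMod p}

theorem zero_mem_freeBase (hε : ε ∈ boundedCS X) : (0 : X →₀ ZMod p) ∈ freeBase p z n ε := by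
  have h0 : (0 : X →₀ ZMod p) ∈ Yset p ε := ⟨(z, z), hε z, (sub_self _).symm⟩
  exact ⟨0, by simpa using nsmul_mem_nSumset h0 n, 0, by simp⟩

theorem add_mem_freeBase (ha : a ∈ freeBase p z n ε) (hb : b ∈ freeBase p z m ε') :
    a + b ∈ freeBase p z (n + m) (ε ∪ ε') := by
  obtain ⟨c, hc, i, rfl⟩ := ha
  obtain ⟨d, hd, j, rfl⟩ := hb
  refine ⟨c + d, add_mem_nSumset (nSumset_mono (Yset_mono Set.subset_union_left) hc)
    (nSumset_mono (Yset_mono Set.subset_union_right) hd), i + j, ?_⟩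
  rw [add_smul]; abel

theorem neg_mem_freeBase (hsym : ∀ q : X × X, q ∈ ε ↔ (q.2, q.1) ∈ ε)
    (ha : a ∈ freeBase p z n ε) : -a ∈ freeBase p z n ε := by
  obtain ⟨b, hb, i, rfl⟩ := ha
  exact ⟨-b, neg_mem_nSumset (fun _ => neg_mem_Yset hsym) hb, -i, by rw [neg_smul, neg_add]⟩

theorem freeBase_subset_union_left (hε' : ε' ∈ boundedCS X) :
    freeBase p z n ε ⊆ freeBase p z (n + m) (ε ∪ ε') := fun a ha =>
  add_zero a ▸ add_mem_freeBase ha (zero_mem_freeBase hε')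

theorem freeBase_subset_union_right (hε : ε ∈ boundedCS X) :
    freeBase p z m ε' ⊆ freeBase p z (n + m) (ε ∪ ε') := fun a ha =>
  zero_add a ▸ add_mem_freeBase (zero_mem_freeBase hε) ha

-- `single x k = k.val • (single x 1 - single z 1) + k • single z 1`
theorem single_mem_freeBase [NeZero p] (x : X) (k : ZMod p) :
    Finsupp.single x k ∈ freeBase p z k.val Set.univ := by
  have hx : Finsupp.single x 1 - Finsupp.single z 1 ∈ Yset p (Set.univ : Set (X × X)) :=
    ⟨(x, z), trivial, rfl⟩
  refine ⟨_, nsmul_mem_nSumset hx k.val, k, ?_⟩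
  simp [smul_sub, Finsupp.smul_single]

theorem exists_mem_freeBase [NeZero p] (a : X →₀ ZMod p) :
    ∃ n, a ∈ freeBase p z n Set.univ := by
  induction a using Finsupp.induction with
  | zero => exact ⟨0, zero_mem_freeBase fun _ => trivial⟩
  | single_add x k a _ _ ih =>
    obtain ⟨n, ha⟩ := ih
    exact ⟨_, Set.union_self Set.univ ▸ add_mem_freeBase (single_mem_freeBase x k) ha⟩

theorem card_support_le_of_mem_freeBase (ha : a ∈ freeBase p z n ε) :
    #a.support ≤ n * 2 + 1 := by
  classical
  obtain ⟨b, hb, i, rfl⟩ := ha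
  calc #(b + i • Finsupp.single z 1).support
      ≤ #b.support + #(i • Finsupp.single z (1 : ZMod p)).support :=
        (card_le_card Finsupp.support_add).trans (card_union_le _ _)
    _ ≤ n * 2 + #{z} :=
        add_le_add (card_support_le_of_mem_nSumset (fun _ => card_support_le_of_mem_Yset) hb)
          (card_le_card (Finsupp.support_smul.trans Finsupp.support_single_subset))
    _ = n * 2 + 1 := by simp

theorem mem_union_iff_swap_mem_union (hsym : ∀ q : X × X, q ∈ ε ↔ (q.2, q.1) ∈ ε)
    (hsym' : ∀ q : X × X, q ∈ ε' ↔ (q.2, q.1) ∈ ε') (q : X × X) :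
    q ∈ ε ∪ ε' ↔ (q.2, q.1) ∈ ε ∪ ε' := by
  rw [Set.mem_union, Set.mem_union, hsym q, hsym' q]

theorem isAddGroupIdeal_freeIdeal [NeZero p] (z : X) : IsAddGroupIdeal (freeIdeal p z) := by
  have union_mem : ∀ B ∈ freeIdeal p z, ∀ C ∈ freeIdeal p z, B ∪ C ∈ freeIdeal p z := by
    rintro B ⟨n, ε, hε, hsym, hB⟩ C ⟨m, ε', hε', hsym', hC⟩
    exact ⟨n + m, ε ∪ ε', fun x => Or.inl (hε x), mem_union_iff_swap_mem_union hsym hsym',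
      Set.union_subset (hB.trans (freeBase_subset_union_left hε'))
        (hC.trans (freeBase_subset_union_right hε))⟩
  refine ⟨fun B ⟨n, ε, hε, hsym, hB⟩ C hC => ⟨n, ε, hε, hsym, hC.trans hB⟩, union_mem,
    fun B hB => ?_, ?_⟩
  · induction B, hB using Set.Finite.induction_on with
    | empty => exact ⟨0, Set.univ, fun _ => trivial, fun _ => Iff.rfl, Set.empty_subset _⟩
    | @insert a B _ _ ih =>
      obtain ⟨n, ha⟩ := exists_mem_freeBase (z := z) a
      exact union_mem {a} ⟨n, Set.univ, fun _ => trivial, fun _ => Iff.rfl,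
        Set.singleton_subset_iff.2 ha⟩ B ih
  · rintro B ⟨n, ε, hε, hsym, hB⟩ C ⟨m, ε', hε', hsym', hC⟩
    refine ⟨n + m, ε ∪ ε', fun x => Or.inl (hε x), mem_union_iff_swap_mem_union hsym hsym', ?_⟩
    rintro _ ⟨b, hb, c, hc, rfl⟩
    exact sub_eq_add_neg b c ▸ add_mem_freeBase (hB hb) (neg_mem_freeBase hsym' (hC hc))

theorem univ_notMem_freeIdeal [Infinite X] [Fact (1 < p)] (z : X) :
    Set.univ ∉ freeIdeal p z := by
  rintro ⟨n, ε, -, -, h⟩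
  obtain ⟨a, ha⟩ := Finsupp.exists_card_support_eq (X := X) (M := ZMod p) (n * 2 + 2)
  have := card_support_le_of_mem_freeBase (h (Set.mem_univ a))
  omega

end FreeIdeal

/-- Remark 3: for an infinite set `X` with the bounded coarse structure, the free
coarse group `A(X)` in the variety `A_p` is unbounded, even though `(X, E)` is
coarsely equivalent to a one-point space, whose free coarse group (a cyclic group of
order `p`) is bounded; hence the free coarse groups are not coarsely equivalent. -/
theorem free_coarse_group_not_invariant_under_coarse_equivalence
    {X : Type*} [Infinite X] (p : ℕ) [Fact p.Prime] (z : X) :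
    (Set.univ : Set (X →₀ ZMod p)) ∉ freeIdeal p z ∧
    (∀ J : Set (Set (ZMod p)), IsAddGroupIdeal J → (Set.univ : Set (ZMod p)) ∈ J) ∧
    CoarselyEquiv (boundedCS X) (boundedCS PUnit) ∧
    ¬ CoarselyEquiv (addIdealCoarse (freeIdeal p z)) (boundedCS (ZMod p)) := by
  have unbounded := univ_notMem_freeIdeal (p := p) z
  exact ⟨unbounded, fun _ hJ => hJ.univ_mem, coarselyEquiv_boundedCS z PUnit.unit,
    fun h => unbounded ((isAddGroupIdeal_freeIdeal z).univ_mem_of_coarselyEquiv h)⟩
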